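/- arXiv:2208.12543 — 5 statements merged into one kernel-verified Lean document; each statement's English description precedes it below -/
import Mathlib

section
/- Let T be a finite rooted tree with N ≥ 1 leaves. Then there exists a labelling λ assigning to every edge e of T a finite binary string λ(e) ∈ {0,1}* such that: (i) for every node u of T, the labels of the edges joining u to its children are pairwise distinct; and (ii) for every leaf ℓ of T, the sum of the lengths of the labels of the edges on the path from the root to ℓ is at most ⌈log₂ N⌉. -/
/-- A rooted forest on a vertex type `V`, given by a parent function.
Well-foundedness guarantees that following parents from any vertex
eventually reaches a root (a vertex with no parent). -/
structure RootedForest (V : Type) where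
  parent : V → Option V
  wf : WellFounded (fun a b => parent b = some a)

namespace RootedForest

/-- A leaf is a vertex with no children. -/
def IsLeaf {V : Type} (F : RootedForest V) (v : V) : Prop := ∀ u, F.parent u ≠ some v

end RootedForest

/-- Given a labelling `lab` where `lab v` is the binary string attached to the edge
joining `v` to its parent, `pathLabelLength F lab v` is the total length of the labels
of the edges on the path from the root to `v`. -/
noncomputable def pathLabelLength {V : Type} (F : RootedForest V) (lab : V → List Bool) :
    V → ℕ :=
  F.wf.fix (fun v ih =>
    match h : F.parent v with
    | none => 0
    | some p => ih p h + (lab v).length)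

set_option linter.unusedSectionVars false

namespace Stmt0Aux

/-! ### Pure number lemmas -/

lemma testBit_eq_of_size_xor_le {a b t i : ℕ} (h : Nat.size (a ^^^ b) ≤ t) (hi : t ≤ i) :
    a.testBit i = b.testBit i := by
  have hx : (a ^^^ b) < 2 ^ i :=
    lt_of_lt_of_le (Nat.size_le.mp h) (Nat.pow_le_pow_right (by norm_num) hi)
  have := Nat.testBit_lt_two_pow hx
  rw [Nat.testBit_xor] at this
  simpa using this

lemma shiftRight_eq_of_size_xor_le {a b t : ℕ} (h : Nat.size (a ^^^ b) ≤ t) :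
    a >>> t = b >>> t :=
  Nat.eq_of_testBit_eq fun i => by
    rw [Nat.testBit_shiftRight, Nat.testBit_shiftRight]
    exact testBit_eq_of_size_xor_le h (Nat.le_add_right _ _)

lemma size_xor_le_of_shiftRight_eq {a b t : ℕ} (h : a >>> t = b >>> t) :
    Nat.size (a ^^^ b) ≤ t := by
  rw [Nat.size_le]
  have h0 : (a ^^^ b) >>> t = 0 := by
    apply Nat.eq_of_testBit_eq
    intro i
    have := congrArg (fun x => Nat.testBit x i) h
    simp only [Nat.testBit_shiftRight] at this
    simp [Nat.testBit_shiftRight, Nat.testBit_xor, this]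
  rw [Nat.shiftRight_eq_div_pow] at h0
  have h2 : 0 < 2 ^ t := Nat.pow_pos (by norm_num)
  exact ((Nat.div_eq_zero_iff).mp h0).resolve_left h2.ne'
  
lemma shiftRight_sandwich {a x b t : ℕ} (hax : a ≤ x) (hxb : x ≤ b)
    (h : Nat.size (a ^^^ b) ≤ t) : x >>> t = a >>> t := by
  have hab := shiftRight_eq_of_size_xor_le h
  have h1 : a >>> t ≤ x >>> t := by
    simp only [Nat.shiftRight_eq_div_pow]; exact Nat.div_le_div_right hax
  have h2 : x >>> t ≤ b >>> t := by
    simp only [Nat.shiftRight_eq_div_pow]; exact Nat.div_le_div_right hxb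
  omega


/-! ### Tree lemmas -/

variable {V : Type} [Fintype V]

/-- `par F a b` iff `b` is the parent of `a`. -/
def par (F : RootedForest V) (a b : V) : Prop := F.parent a = some b

/-- `anc F a b` iff `b` is an ancestor of `a` (or equal). -/
def anc (F : RootedForest V) : V → V → Prop := Relation.ReflTransGen (par F)

lemma not_transGen_self (F : RootedForest V) (v : V) :
    ¬ Relation.TransGen (par F) v v := by
  intro h
  have h' : Relation.TransGen (fun a b => F.parent b = some a) v v :=
    (Relation.transGen_swap (r := fun a b => F.parent b = some a)).mp h
  exact (F.wf.transGen).asymmetric _ _ h' h'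

lemma par_wf (F : RootedForest V) : WellFounded (par F) := by
  haveI : IsTrans V (Relation.TransGen (par F)) := ⟨fun _ _ _ => Relation.TransGen.trans⟩
  haveI : IsIrrefl V (Relation.TransGen (par F)) := ⟨not_transGen_self F⟩
  exact Subrelation.wf (fun h => Relation.TransGen.single h)
    (Finite.wellFounded_of_trans_of_irrefl _)

open Classical in
noncomputable def leavesUnder (F : RootedForest V) (v : V) : Finset V :=
  Finset.univ.filter (fun ℓ => F.IsLeaf ℓ ∧ anc F ℓ v)

noncomputable def wt (F : RootedForest V) (v : V) : ℕ := (leavesUnder F v).card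

open Classical in
lemma mem_leavesUnder {F : RootedForest V} {ℓ v : V} :
    ℓ ∈ leavesUnder F v ↔ F.IsLeaf ℓ ∧ anc F ℓ v := by
  simp [leavesUnder]

lemma exists_leaf_under (F : RootedForest V) (v : V) :
    ∃ ℓ, ℓ ∈ leavesUnder F v := by
  induction v using (par_wf F).induction with
  | _ v ih =>
    by_cases hv : F.IsLeaf v
    · exact ⟨v, mem_leavesUnder.mpr ⟨hv, Relation.ReflTransGen.refl⟩⟩
    · simp only [RootedForest.IsLeaf, not_forall, not_not] at hv
      obtain ⟨c, hc⟩ := hv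
      obtain ⟨ℓ, hℓ⟩ := ih c hc
      rw [mem_leavesUnder] at hℓ
      exact ⟨ℓ, mem_leavesUnder.mpr ⟨hℓ.1, hℓ.2.tail hc⟩⟩

lemma wt_pos (F : RootedForest V) (v : V) : 1 ≤ wt F v := by
  obtain ⟨ℓ, hℓ⟩ := exists_leaf_under F v
  exact Finset.card_pos.mpr ⟨ℓ, hℓ⟩

lemma anc_total (F : RootedForest V) :
    ∀ ℓ x y : V, anc F ℓ x → anc F ℓ y → anc F x y ∨ anc F y x := by
  intro ℓ
  induction ℓ using F.wf.induction with
  | _ ℓ ih =>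
    intro x y hx hy
    rcases Relation.ReflTransGen.cases_head hx with rfl | ⟨m, hm, hmx⟩
    · exact Or.inl hy
    rcases Relation.ReflTransGen.cases_head hy with rfl | ⟨m', hm', hmy⟩
    · exact Or.inr hx
    have hm2 : F.parent ℓ = some m := hm
    have hm2' : F.parent ℓ = some m' := hm'
    have hmm : m' = m := by rw [hm2] at hm2'; exact (Option.some.inj hm2').symm
    subst hmm
    exact ih m' hm2' x y hmx hmy

lemma disjoint_leavesUnder (F : RootedForest V) {u v₁ v₂ : V}
    (h₁ : F.parent v₁ = some u) (h₂ : F.parent v₂ = some u) (hne : v₁ ≠ v₂) :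
    Disjoint (leavesUnder F v₁) (leavesUnder F v₂) := by
  have key : ∀ {x y : V}, F.parent x = some u → F.parent y = some u → x ≠ y →
      anc F x y → False := by
    intro x y hx hy hxy hanc
    rcases Relation.ReflTransGen.cases_head hanc with rfl | ⟨m, hm, hmy⟩
    · exact hxy rfl
    have hm2 : F.parent x = some m := hm
    have hmu : m = u := by rw [hx] at hm2; exact Option.some.inj hm2.symm
    subst hmu
    exact not_transGen_self F _ (Relation.TransGen.tail' hmy hy)
  rw [Finset.disjoint_left]
  intro ℓ hl₁ hl₂
  rw [mem_leavesUnder] at hl₁ hl₂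
  rcases anc_total F ℓ v₁ v₂ hl₁.2 hl₂.2 with h | h
  · exact key h₁ h₂ hne h
  · exact key h₂ h₁ hne.symm h

open Classical in
noncomputable def children (F : RootedForest V) (u : V) : Finset V :=
  Finset.univ.filter (fun c => F.parent c = some u)

open Classical in
lemma mem_children {F : RootedForest V} {c u : V} :
    c ∈ children F u ↔ F.parent c = some u := by simp [children]

lemma sum_wt_children_le (F : RootedForest V) (u : V) :
    ∑ c ∈ children F u, wt F c ≤ wt F u := by
  classical
  have hdisj : ∀ x ∈ children F u, ∀ y ∈ children F u, x ≠ y →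
      Disjoint (leavesUnder F x) (leavesUnder F y) := by
    intro x hx y hy hxy
    exact disjoint_leavesUnder F (mem_children.mp hx) (mem_children.mp hy) hxy
  calc ∑ c ∈ children F u, wt F c
      = ((children F u).biUnion (leavesUnder F)).card := (Finset.card_biUnion hdisj).symm
    _ ≤ (leavesUnder F u).card := by
        apply Finset.card_le_card
        intro ℓ hℓ
        rw [Finset.mem_biUnion] at hℓ
        obtain ⟨c, hc, hℓc⟩ := hℓ
        rw [mem_leavesUnder] at hℓc ⊢
        exact ⟨hℓc.1, hℓc.2.tail (mem_children.mp hc)⟩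

open Classical in
/-- DFS-style starting index of the leaf interval of each vertex. -/
noncomputable def idx (F : RootedForest V) (e : V → ℕ) : V → ℕ :=
  F.wf.fix fun v ih =>
    match h : F.parent v with
    | none => 0
    | some u => ih u h + ∑ c ∈ (children F u).filter (fun c => e c < e v), wt F c

open Classical in
lemma idx_eq (F : RootedForest V) (e : V → ℕ) (v : V) :
    idx F e v = match F.parent v with
      | none => 0
      | some u => idx F e u + ∑ c ∈ (children F u).filter (fun c => e c < e v), wt F c := by
  rw [idx, WellFounded.fix_eq]
  split <;> simp_all

lemma idx_root (F : RootedForest V) (e : V → ℕ) {v : V} (h : F.parent v = none) :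
    idx F e v = 0 := by
  rw [idx_eq, h]

open Classical in
lemma idx_child (F : RootedForest V) (e : V → ℕ) {v u : V} (h : F.parent v = some u) :
    idx F e v = idx F e u + ∑ c ∈ (children F u).filter (fun c => e c < e v), wt F c := by
  rw [idx_eq, h]

lemma idx_interval_child (F : RootedForest V) (e : V → ℕ) {v u : V}
    (h : F.parent v = some u) :
    idx F e u ≤ idx F e v ∧ idx F e v + wt F v ≤ idx F e u + wt F u := by
  classical
  rw [idx_child F e h]
  constructor
  · exact Nat.le_add_right _ _
  · have hsub : insert v ((children F u).filter (fun c => e c < e v)) ⊆ children F u := by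
      intro c hc
      rcases Finset.mem_insert.mp hc with rfl | hc
      · exact mem_children.mpr h
      · exact (Finset.mem_filter.mp hc).1
    have hnot : v ∉ (children F u).filter (fun c => e c < e v) := by
      simp [Finset.mem_filter]
    have h1 : wt F v + ∑ c ∈ (children F u).filter (fun c => e c < e v), wt F c
        ≤ ∑ c ∈ children F u, wt F c := by
      rw [← Finset.sum_insert hnot]
      exact Finset.sum_le_sum_of_subset hsub
    have h2 := sum_wt_children_le F u
    omega

lemma idx_sibling (F : RootedForest V) (e : V → ℕ) {v₁ v₂ u : V}
    (h₁ : F.parent v₁ = some u) (h₂ : F.parent v₂ = some u) (hlt : e v₁ < e v₂) :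
    idx F e v₁ + wt F v₁ ≤ idx F e v₂ := by
  classical
  rw [idx_child F e h₁, idx_child F e h₂]
  have hnot : v₁ ∉ (children F u).filter (fun c => e c < e v₁) := by
    simp [Finset.mem_filter]
  have hsub : insert v₁ ((children F u).filter (fun c => e c < e v₁))
      ⊆ (children F u).filter (fun c => e c < e v₂) := by
    intro c hc
    rcases Finset.mem_insert.mp hc with rfl | hc
    · exact Finset.mem_filter.mpr ⟨mem_children.mpr h₁, hlt⟩
    · rcases Finset.mem_filter.mp hc with ⟨hc1, hc2⟩
      exact Finset.mem_filter.mpr ⟨hc1, hc2.trans hlt⟩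
  have h1 : ∑ c ∈ insert v₁ ((children F u).filter (fun c => e c < e v₁)), wt F c
      ≤ ∑ c ∈ (children F u).filter (fun c => e c < e v₂), wt F c :=
    Finset.sum_le_sum_of_subset hsub
  rw [Finset.sum_insert hnot] at h1
  omega

open Classical in
lemma idx_add_wt_le (F : RootedForest V) (e : V → ℕ) (v : V) :
    idx F e v + wt F v ≤ (Finset.univ.filter (fun ℓ => F.IsLeaf ℓ)).card := by
  induction v using F.wf.induction with
  | _ v ih =>
    match h : F.parent v with
    | none =>
        rw [idx_root F e h]
        simp only [Nat.zero_add]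
        apply Finset.card_le_card
        intro ℓ hℓ
        simp only [Finset.mem_filter, Finset.mem_univ, true_and]
        exact (mem_leavesUnder.mp hℓ).1
    | some u =>
        have h1 := idx_interval_child F e h
        have h2 := ih u h
        omega

lemma shiftRight_xor (a b i : ℕ) : (a ^^^ b) >>> i = (a >>> i) ^^^ (b >>> i) :=
  Nat.eq_of_testBit_eq fun j => by
    simp [Nat.testBit_shiftRight, Nat.testBit_xor]

lemma testBit_eq_of_sandwich {a x y b t j : ℕ} (h1 : a ≤ x) (hx : x ≤ b) (h2 : a ≤ y)
    (hy : y ≤ b) (hs : Nat.size (a ^^^ b) ≤ t) (hj : t ≤ j) :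
    x.testBit j = y.testBit j := by
  have e1 := shiftRight_sandwich h1 hx hs
  have e2 := shiftRight_sandwich h2 hy hs
  have e3 := congrArg (fun z => Nat.testBit z (j - t)) (e1.trans e2.symm)
  simpa [Nat.testBit_shiftRight, Nat.add_sub_cancel' hj] using e3

lemma map_range_inj {P : ℕ} {f g : ℕ → Bool}
    (h : (List.range P).map f = (List.range P).map g) : ∀ i < P, f i = g i := by
  intro i hi
  have h2 := congrArg (fun l => l[i]?) h
  simpa [List.getElem?_map, List.getElem?_range, hi] using h2

/-- In an interval `[a,b]` whose binary common-prefix ends exactly at bit `τ'`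
(`size (a ^^^ b) = τ' + 1`), `a >>> τ'` is even and `b >>> τ' = a >>> τ' + 1`. -/
lemma interval_split {a b τ' : ℕ} (hab : a ≤ b) (hsize : Nat.size (a ^^^ b) = τ' + 1) :
    (a >>> τ') % 2 = 0 ∧ b >>> τ' = a >>> τ' + 1 := by
  have hlow : 2 ^ τ' ≤ a ^^^ b := Nat.lt_size.mp (by omega)
  have hhigh : a ^^^ b < 2 ^ (τ' + 1) := Nat.size_le.mp (le_of_eq hsize)
  have hm1 : (a ^^^ b) >>> τ' = 1 := by
    rw [Nat.shiftRight_eq_div_pow]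
    apply Nat.div_eq_of_lt_le
    · simpa using hlow
    · rw [pow_succ] at hhigh; omega
  rw [shiftRight_xor] at hm1
  set A := a >>> τ' with hA
  set B := b >>> τ' with hB
  have hle : A ≤ B := by
    rw [hA, hB, Nat.shiftRight_eq_div_pow, Nat.shiftRight_eq_div_pow]
    exact Nat.div_le_div_right hab
  have hne : A ≠ B := fun h => by rw [h, Nat.xor_self] at hm1; exact one_ne_zero hm1.symm
  have hhalf : A >>> 1 = B >>> 1 :=
    shiftRight_eq_of_size_xor_le (by rw [hm1, Nat.size_one])
  rw [Nat.shiftRight_one, Nat.shiftRight_one] at hhalf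
  omega

end Stmt0Aux

lemma pathLabelLength_eq {V : Type} (F : RootedForest V) (lab : V → List Bool) (v : V) :
    pathLabelLength F lab v = match F.parent v with
      | none => 0
      | some u => pathLabelLength F lab u + (lab v).length := by
  rw [pathLabelLength, WellFounded.fix_eq]
  split <;> simp_all

open Stmt0Aux in
/-- every finite rooted tree with `N ≥ 1` leaves admits an edge labelling
by binary strings such that labels of edges to children of a common node are pairwise
distinct, and the total label length along any root-to-leaf path is at most `⌈log₂ N⌉`. -/
theorem stmt0 {V : Type} [Fintype V] (F : RootedForest V)
    (hTree : ∃! r : V, F.parent r = none)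
    (N : ℕ) (hN : 1 ≤ N)
    (hcard : Nat.card {v : V // F.IsLeaf v} = N) :
    ∃ lab : V → List Bool,
      (∀ u v₁ v₂ : V, F.parent v₁ = some u → F.parent v₂ = some u → v₁ ≠ v₂ →
          lab v₁ ≠ lab v₂) ∧
      (∀ ℓ : V, F.IsLeaf ℓ → pathLabelLength F lab ℓ ≤ Nat.clog 2 N) := by
  classical
  have hkN : N ≤ 2 ^ Nat.clog 2 N := Nat.le_pow_clog one_lt_two N
  set k := Nat.clog 2 N with hk
  obtain ⟨e, he⟩ : ∃ e : V → ℕ, Function.Injective e :=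
    ⟨fun v => ((Fintype.equivFin V) v : ℕ),
     fun x y h => (Fintype.equivFin V).injective (Fin.val_injective h)⟩
  set a : V → ℕ := idx F e with ha
  set b : V → ℕ := fun v => a v + wt F v - 1 with hbdef
  set t : V → ℕ := fun v => Nat.size (a v ^^^ b v) with htdef
  set p : V → ℕ := fun v => k - t v with hpdef
  set s : V → List Bool :=
    fun v => (List.range (p v)).map (fun i => (a v).testBit (k - 1 - i)) with hsdef
  set lab : V → List Bool := fun v => match F.parent v with
    | none => []
    | some u => (s v).drop (p u) with hlabdef
  -- basic facts
  have hNl : (Finset.univ.filter (fun v => F.IsLeaf v)).card = N := by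
    rw [← hcard, Nat.card_eq_fintype_card, Fintype.card_subtype]
  have hbound : ∀ v, a v + wt F v ≤ N := by
    intro v; rw [ha, ← hNl]; exact idx_add_wt_le F e v
  have hwpos : ∀ v, 1 ≤ wt F v := wt_pos F
  have hab : ∀ v, a v ≤ b v := by
    intro v; have := hwpos v; simp only [hbdef]; omega
  have hblt : ∀ v, b v < 2 ^ k := by
    intro v; have h1 := hbound v; have h2 := hwpos v; simp only [hbdef]; omega
  have halt : ∀ v, a v < 2 ^ k := fun v => lt_of_le_of_lt (hab v) (hblt v)
  have htk : ∀ v, t v ≤ k := by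
    intro v
    simp only [htdef]
    apply size_xor_le_of_shiftRight_eq
    rw [Nat.shiftRight_eq_div_pow, Nat.shiftRight_eq_div_pow,
        Nat.div_eq_of_lt (halt v), Nat.div_eq_of_lt (hblt v)]
  have hcontain : ∀ {v u : V}, F.parent v = some u → a u ≤ a v ∧ b v ≤ b u := by
    intro v u h
    have h1 := idx_interval_child F e h
    rw [← ha] at h1
    have h2 := hwpos v; have h3 := hwpos u
    simp only [hbdef]; omega
  have hts : ∀ {v u : V}, F.parent v = some u → t v ≤ t u := by
    intro v u h
    obtain ⟨h1, h2⟩ := hcontain h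
    have hsz : Nat.size (a u ^^^ b u) ≤ t u := by simp only [htdef]; exact le_refl _
    have e1 := shiftRight_sandwich h1 ((hab v).trans h2) hsz
    have e2 := shiftRight_sandwich (h1.trans (hab v)) h2 hsz
    simp only [htdef]
    have : Nat.size (a v ^^^ b v) ≤ t u := size_xor_le_of_shiftRight_eq (e1.trans e2.symm)
    simpa only [htdef] using this
  have hps : ∀ {v u : V}, F.parent v = some u → p u ≤ p v := by
    intro v u h
    have h1 := hts h; have h2 := htk v; have h3 := htk u
    simp only [hpdef]; omega
  have hlab_some : ∀ {v u : V}, F.parent v = some u → lab v = (s v).drop (p u) := by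
    intro v u h; simp only [hlabdef]; rw [h]
  have hslen : ∀ v, (s v).length = p v := by intro v; simp [hsdef]
  have hPLL : ∀ v, pathLabelLength F lab v ≤ p v := by
    intro v
    induction v using F.wf.induction with
    | _ v ih =>
      cases h : F.parent v with
      | none => rw [pathLabelLength_eq, h]; simp
      | some u =>
        rw [pathLabelLength_eq, h]
        show pathLabelLength F lab u + (lab v).length ≤ p v
        have h1 := ih u h
        have h2 := hps h
        rw [hlab_some h, List.length_drop, hslen]
        omega
  refine ⟨lab, ?_, ?_⟩
  · -- distinctness
    have core : ∀ u v₁ v₂ : V, F.parent v₁ = some u → F.parent v₂ = some u →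
        e v₁ < e v₂ → lab v₁ = lab v₂ → False := by
      intro u v₁ v₂ h₁ h₂ hlt heq
      have hsib := idx_sibling F e h₁ h₂ hlt
      rw [← ha] at hsib
      have hb1a2 : b v₁ < a v₂ := by
        have := hwpos v₁; simp only [hbdef]; omega
      obtain ⟨hau1, hb1u⟩ := hcontain h₁
      obtain ⟨hau2, hb2u⟩ := hcontain h₂
      have htu := htk u
      have ht1k := htk v₁
      have ht2k := htk v₂
      have hszu : Nat.size (a u ^^^ b u) ≤ t u := by simp only [htdef]; exact le_refl _
      have htake : ∀ i < p u, (a v₁).testBit (k-1-i) = (a v₂).testBit (k-1-i) := by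
        intro i hi
        have hj : t u ≤ k - 1 - i := by simp only [hpdef] at hi; omega
        exact testBit_eq_of_sandwich hau1 ((hab v₁).trans hb1u) hau2
          ((hab v₂).trans hb2u) hszu hj
      have hdrop : (s v₁).drop (p u) = (s v₂).drop (p u) := by
        rw [← hlab_some h₁, ← hlab_some h₂]; exact heq
      have hp1 := hps h₁
      have hp2 := hps h₂
      have etake : ∀ x : V, p u ≤ p x →
          (s x).take (p u) = (List.range (p u)).map (fun i => (a x).testBit (k-1-i)) := by
        intro x hx
        simp only [hsdef]
        rw [← List.map_take, List.take_range, min_eq_left hx]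
      have htake' : (s v₁).take (p u) = (s v₂).take (p u) := by
        rw [etake v₁ hp1, etake v₂ hp2]
        exact List.map_congr_left (fun i hi => htake i (List.mem_range.mp hi))
      have hseq : s v₁ = s v₂ := by
        rw [← List.take_append_drop (p u) (s v₁), ← List.take_append_drop (p u) (s v₂),
          htake', hdrop]
      have hlen := congrArg List.length hseq
      rw [hslen, hslen] at hlen
      have ht12 : t v₁ = t v₂ := by simp only [hpdef] at hlen; omega
      have hp12 : p v₁ = p v₂ := by simp only [hpdef]; omega
      -- bits of a v₁ and a v₂ agree at positions ≥ t v₁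
      have hbit : ∀ j, t v₁ ≤ j → (a v₁).testBit j = (a v₂).testBit j := by
        intro j hj
        rcases lt_or_ge j k with hjk | hjk
        · have hs2 : (List.range (p v₁)).map (fun i => (a v₁).testBit (k-1-i)) =
              (List.range (p v₁)).map (fun i => (a v₂).testBit (k-1-i)) := by
            have h5 := hseq
            simp only [hsdef] at h5
            rw [← hp12] at h5
            exact h5
          have hi : k - 1 - j < p v₁ := by simp only [hpdef]; omega
          have h6 := map_range_inj hs2 (k-1-j) hi
          simpa [show k - 1 - (k-1-j) = j by omega] using h6
        · have e1 := Nat.testBit_lt_two_pow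
            (lt_of_lt_of_le (halt v₁) (Nat.pow_le_pow_right (by norm_num) hjk))
          have e2 := Nat.testBit_lt_two_pow
            (lt_of_lt_of_le (halt v₂) (Nat.pow_le_pow_right (by norm_num) hjk))
          rw [e1, e2]
      have hH : a v₁ >>> t v₁ = a v₂ >>> t v₁ := by
        apply Nat.eq_of_testBit_eq
        intro i
        rw [Nat.testBit_shiftRight, Nat.testBit_shiftRight]
        exact hbit (t v₁ + i) (Nat.le_add_right _ _)
      rcases Nat.eq_zero_or_pos (t v₁) with h0 | hpos
      · have hx1 : a v₁ = b v₁ := by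
          have h7 : Nat.size (a v₁ ^^^ b v₁) = 0 := by
            simp only [htdef] at h0; exact h0
          exact Nat.eq_of_testBit_eq fun i => by
            have := congrArg (Nat.testBit · i) (Nat.size_eq_zero.mp h7)
            simpa [Nat.testBit_xor] using this
        have h8 : a v₁ = a v₂ := by simpa [h0] using hH
        omega
      · obtain ⟨τ', hτ'⟩ : ∃ τ', t v₁ = τ' + 1 := ⟨t v₁ - 1, by omega⟩
        have hs1 : Nat.size (a v₁ ^^^ b v₁) = τ' + 1 := by
          simp only [htdef] at hτ'; exact hτ'
        have hs2' : Nat.size (a v₂ ^^^ b v₂) = τ' + 1 := by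
          have := ht12
          simp only [htdef] at this hτ'
          omega
        obtain ⟨hA1, hB1⟩ := interval_split (hab v₁) hs1
        obtain ⟨hA2, hB2⟩ := interval_split (hab v₂) hs2'
        have d1 : (a v₁ >>> τ') / 2 = a v₁ >>> (τ' + 1) := by
          rw [Nat.shiftRight_add, Nat.shiftRight_one]
        have d2 : (a v₂ >>> τ') / 2 = a v₂ >>> (τ' + 1) := by
          rw [Nat.shiftRight_add, Nat.shiftRight_one]
        have dmono : b v₁ >>> τ' ≤ a v₂ >>> τ' := by
          rw [Nat.shiftRight_eq_div_pow, Nat.shiftRight_eq_div_pow]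
          exact Nat.div_le_div_right (le_of_lt hb1a2)
        rw [hτ'] at hH
        omega
    intro u v₁ v₂ h₁ h₂ hne heq
    rcases lt_or_gt_of_ne (fun h : e v₁ = e v₂ => hne (he h)) with hlt | hgt
    · exact core u v₁ v₂ h₁ h₂ hlt heq
    · exact core u v₂ v₁ h₂ h₁ hgt heq.symm
  · -- path length bound
    intro ℓ hℓ
    have h1 := hPLL ℓ
    have h2 : p ℓ ≤ k := by simp only [hpdef]; omega
    exact h1.trans h2
end

section
/- Let F = ⋀_{i=1}^r ⋁_{j=1}^{t_i} F_{i,j} be an anti-monotone 3-normalized Boolean formula over variables x_1, …, x_n, where each F_{i,j} is a conjunction of negated variables, and let k ≥ 1 be an integer. Define a BinCSP instance I as follows: the Gaifman graph G has vertex set W ∪ S with W = {w_1, …, w_k} and S = {v_1, …, v_r}, where W is a clique, S is an independent set, and every vertex of W is adjacent to every vertex of S; for w ∈ W, D(w) = {x_1, …, x_n}, and for distinct w, w′ ∈ W, C(w, w′) = {(x_i, x_j) : i ≠ j}; for each i, D(v_i) = {1, …, t_i}, and for w ∈ W, C(v_i, w) = {(j, x_{j′}) : the literal ¬x_{j′}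 does not occur in F_{i,j}}. Then I is satisfiable if and only if F can be satisfied by a truth assignment of weight exactly k. -/
/-- correctness of the W[3]-hardness reduction. Given an anti-monotone
3-normalized formula `F = ⋀_{i<r} ⋁_{j<t i} F_{i,j}` (where `F_{i,j}` is the conjunction
of the literals `¬x_{j'}` for `j' ∈ neg i j`) and `k ≥ 1`, the described BinCSP instance
is satisfiable if and only if `F` is satisfied by some truth assignment of weight
exactly `k`. Vertices: `Sum.inl w` for `w ∈ W = {w_1,…,w_k}`, `Sum.inr i` for
`v_i ∈ S = {v_1,…,v_r}`. Values are natural numbers: a value `x < n` for a `W`-vertex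
stands for the variable `x_{x}`, a value `j < t i` for `v_i` points at the `j`-th term. -/
theorem stmt5 (n r k : ℕ) (hk : 1 ≤ k)
    (t : Fin r → ℕ) (neg : (i : Fin r) → Fin (t i) → Finset (Fin n))
    (G : SimpleGraph (Fin k ⊕ Fin r))
    (hG : ∀ a b : Fin k ⊕ Fin r, G.Adj a b ↔ (a ≠ b ∧ (a.isLeft ∨ b.isLeft)))
    (D : Fin k ⊕ Fin r → Set ℕ)
    (hDW : ∀ w : Fin k, D (Sum.inl w) = {x : ℕ | x < n})
    (hDS : ∀ i : Fin r, D (Sum.inr i) = {j : ℕ | j < t i})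
    (C : (Fin k ⊕ Fin r) → (Fin k ⊕ Fin r) → Set (ℕ × ℕ))
    (hCWW : ∀ w w' : Fin k, w ≠ w' →
      C (Sum.inl w) (Sum.inl w') = {p : ℕ × ℕ | p.1 < n ∧ p.2 < n ∧ p.1 ≠ p.2})
    (hCSW : ∀ (i : Fin r) (w : Fin k),
      C (Sum.inr i) (Sum.inl w) =
        {p : ℕ × ℕ | ∃ (hj : p.1 < t i) (hx : p.2 < n), ⟨p.2, hx⟩ ∉ neg i ⟨p.1, hj⟩})
    (hCWS : ∀ (w : Fin k) (i : Fin r),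
      C (Sum.inl w) (Sum.inr i) = {p : ℕ × ℕ | (p.2, p.1) ∈ C (Sum.inr i) (Sum.inl w)}) :
    (∃ η : (Fin k ⊕ Fin r) → ℕ,
        (∀ v, η v ∈ D v) ∧ ∀ a b, G.Adj a b → (η a, η b) ∈ C a b) ↔
    (∃ σ : Fin n → Bool,
        (Finset.univ.filter (fun x => σ x = true)).card = k ∧
        ∀ i : Fin r, ∃ j : Fin (t i), ∀ x ∈ neg i j, σ x = false) := by
  constructor
  · rintro ⟨η, hD, hC⟩
    have hWn : ∀ w : Fin k, η (Sum.inl w) < n := by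
      intro w; have := hD (Sum.inl w); rw [hDW] at this; exact this
    set f : Fin k → Fin n := fun w => ⟨η (Sum.inl w), hWn w⟩ with hf
    have hfinj : Function.Injective f := by
      intro w w' hww
      by_contra hne
      have hadj : G.Adj (Sum.inl w) (Sum.inl w') := by
        rw [hG]; exact ⟨by simp [hne], Or.inl rfl⟩
      have := hC _ _ hadj
      rw [hCWW w w' hne] at this
      exact this.2.2 (congrArg Fin.val hww)
    refine ⟨fun x => decide (∃ w : Fin k, f w = x), ?_, ?_⟩
    · have : (Finset.univ.filter (fun x => decide (∃ w : Fin k, f w = x) = true))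
          = Finset.univ.image f := by
        ext x; simp
      rw [this, Finset.card_image_of_injective _ hfinj, Finset.card_univ, Fintype.card_fin]
    · intro i
      have hji : η (Sum.inr i) < t i := by
        have := hD (Sum.inr i); rw [hDS] at this; exact this
      refine ⟨⟨η (Sum.inr i), hji⟩, ?_⟩
      intro x hx
      simp only [decide_eq_false_iff_not]
      rintro ⟨w, rfl⟩
      have hadj : G.Adj (Sum.inr i) (Sum.inl w) := by
        rw [hG]; exact ⟨by simp, Or.inr rfl⟩
      have := hC _ _ hadj
      rw [hCSW i w] at this
      obtain ⟨hj, hxlt, hnot⟩ := this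
      exact hnot hx
  · rintro ⟨σ, hcard, hsat⟩
    set T := Finset.univ.filter (fun x => σ x = true) with hT
    have e : Fin k ≃o T := T.orderIsoOfFin hcard
    choose j hj using hsat
    refine ⟨Sum.elim (fun w => ((e w : Fin n) : ℕ)) (fun i => (j i : ℕ)), ?_, ?_⟩
    · rintro (w | i)
      · rw [hDW]; exact (e w : Fin n).isLt
      · rw [hDS]; exact (j i).isLt
    · rintro (w | i) (w' | i') hadj <;> rw [hG] at hadj
      · have hne : w ≠ w' := by rintro rfl; exact hadj.1 rfl
        rw [hCWW w w' hne]
        refine ⟨(e w : Fin n).isLt, (e w' : Fin n).isLt, ?_⟩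
        intro heq
        apply hne
        apply e.injective
        exact Subtype.ext (Fin.ext heq)
      · rw [hCWS w i', hCSW i' w]
        refine ⟨(j i').isLt, (e w : Fin n).isLt, ?_⟩
        intro hmem
        have hmem' : (e w : Fin n) ∈ neg i' (j i') := by
          exact hmem
        have := hj i' _ hmem'
        have hσ : σ (e w : Fin n) = true := (Finset.mem_filter.mp (e w).2).2
        rw [this] at hσ; exact Bool.false_ne_true hσ
      · rw [hCSW i w']
        refine ⟨(j i).isLt, (e w' : Fin n).isLt, ?_⟩
        intro hmem
        have hmem' : (e w' : Fin n) ∈ neg i (j i) := by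
          exact hmem
        have := hj i _ hmem'
        have hσ : σ (e w' : Fin n) = true := (Finset.mem_filter.mp (e w').2).2
        rw [this] at hσ; exact Bool.false_ne_true hσ
      · exact absurd hadj.2 (by simp)
end

section
/- Let I be a BinCSP instance with Gaifman graph G, and let W ⊆ V(G) be a vertex cover of G with |W| = k. Over the Boolean variable set X = {x_{w,c} : w ∈ W, c ∈ D(w)}, define F¹ = ⋀_{w∈W} ⋁_{c∈D(w)} x_{w,c}; F² = ⋀_{w₁,w₂∈W, w₁w₂∈E(G)} ⋁_{(c,c′)∈C(w₁,w₂)} (x_{w₁,c} ∧ x_{w₂,c′}); and F⁴ = ⋀_{v∈V(G)∖W} ⋁_{c∈D(v)} ⋀_{w∈W, vw∈E(G)} ⋀_{c′∈D(w), (c,c′)∉C(v,w)} ¬x_{w,c′}. Then the formula F = F¹ ∧ F² ∧ F⁴ has a satisfying truth assignment of weight exactly k if and only if I is satisfiable. -/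
/-!
In one direction, a solution `η` gives the weight-`k` assignment that sets `x_{w,c}` exactly
when `c = η w`. Conversely, `F¹` makes every `w ∈ W` choose some value; since the projection of
the true variables onto `W` is then surjective and both sides have `k` elements, it is bijective,
so each `w ∈ W` chooses exactly one value. With these values `F²` satisfies the edges inside `W`,
and `F⁴` lets every vertex outside `W` take a value compatible with all of its neighbours, which
lie in `W` because `W` is a vertex cover.
-/

section

variable {V A : Type*}

lemma natCard_graph_eq_card (W : Finset V) (D : V → Finset A) (η : V → A)
    (hη : ∀ w ∈ W, η w ∈ D w) :
    Nat.card {p : V × A // p.1 ∈ W ∧ p.2 ∈ D p.1 ∧ p.2 = η p.1} = W.card := by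
  let e : {p : V × A // p.1 ∈ W ∧ p.2 ∈ D p.1 ∧ p.2 = η p.1} ≃ {w : V // w ∈ W} :=
    { toFun := fun p => ⟨p.1.1, p.2.1⟩
      invFun := fun w => ⟨(w.1, η w.1), w.2, hη w.1 w.2, rfl⟩
      left_inv := fun p => Subtype.ext (Prod.ext rfl p.2.2.2.symm)
      right_inv := fun _ => rfl }
  rw [Nat.card_congr e, Nat.card_eq_fintype_card, Fintype.card_coe]

lemma eq_of_natCard_selection_eq_card (W : Finset V) (D : V → Finset A) (τ : V → A → Prop)
    (hcard : Nat.card {p : V × A // p.1 ∈ W ∧ p.2 ∈ D p.1 ∧ τ p.1 p.2} = W.card)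
    (hcover : ∀ w ∈ W, ∃ c ∈ D w, τ w c) {w : V} (hw : w ∈ W) {c c' : A}
    (hc : c ∈ D w) (hc' : c' ∈ D w) (hτc : τ w c) (hτc' : τ w c') : c = c' := by
  let S := {p : V × A // p.1 ∈ W ∧ p.2 ∈ D p.1 ∧ τ p.1 p.2}
  have : Finite S := by
    classical
    refine Set.Finite.to_subtype ((W ×ˢ W.biUnion D : Finset (V × A)).finite_toSet.subset ?_)
    rintro ⟨v, c⟩ ⟨hv, hc, -⟩
    simpa using ⟨hv, v, hv, hc⟩
  let π : S → W := fun p => ⟨p.1.1, p.2.1⟩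
  have hπ : π.Surjective := fun ⟨v, hv⟩ =>
    let ⟨c, hc, hτ⟩ := hcover v hv
    ⟨⟨(v, c), hv, hc, hτ⟩, rfl⟩
  have hπ_bij : π.Bijective := hπ.bijective_of_nat_card_le <| by
    rw [hcard, Nat.card_eq_fintype_card, Fintype.card_coe]
  exact congrArg (fun p : S => p.1.2)
    (hπ_bij.1 (a₁ := ⟨(w, c), hw, hc, hτc⟩) (a₂ := ⟨(w, c'), hw, hc', hτc'⟩) rfl)

lemma exists_solution_of_weight_eq_card (G : SimpleGraph V) (D : V → Finset A)
    (C : V → V → Set (A × A)) (hsym : ∀ u v : V, ∀ a b : A, (a, b) ∈ C u v ↔ (b, a) ∈ C v u)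
    (W : Finset V) (hvc : ∀ u v : V, G.Adj u v → u ∈ W ∨ v ∈ W) (τ : V → A → Prop)
    (hcard : Nat.card {p : V × A // p.1 ∈ W ∧ p.2 ∈ D p.1 ∧ τ p.1 p.2} = W.card)
    (hcover : ∀ w ∈ W, ∃ c ∈ D w, τ w c)
    (hinside : ∀ w₁ ∈ W, ∀ w₂ ∈ W, G.Adj w₁ w₂ →
      ∃ c ∈ D w₁, ∃ c' ∈ D w₂, (c, c') ∈ C w₁ w₂ ∧ τ w₁ c ∧ τ w₂ c')
    (houtside : ∀ v : V, v ∉ W → ∃ c ∈ D v,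
      ∀ w ∈ W, G.Adj v w → ∀ c' ∈ D w, (c, c') ∉ C v w → ¬ τ w c') :
    ∃ η : V → A, (∀ v, η v ∈ D v) ∧ ∀ u v, G.Adj u v → (η u, η v) ∈ C u v := by
  classical
  have hunique : ∀ w ∈ W, ∀ c ∈ D w, ∀ c' ∈ D w, τ w c → τ w c' → c = c' :=
    fun _ hw _ hc _ hc' => eq_of_natCard_selection_eq_card W D τ hcard hcover hw hc hc'
  choose cW hcW hτW using hcover
  choose cO hcO hfree using houtside
  let η v := if h : v ∈ W then cW v h else cO v h
  have hout : ∀ u v, G.Adj u v → u ∉ W → (η u, η v) ∈ C u v := by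
    intro u v huv hu
    have hv : v ∈ W := (hvc u v huv).resolve_left hu
    simp only [η, dif_neg hu, dif_pos hv]
    by_contra hC
    exact hfree u hu v hv huv (cW v hv) (hcW v hv) hC (hτW v hv)
  refine ⟨η, fun v => ?_, fun u v huv => ?_⟩
  · by_cases hv : v ∈ W
    · simpa only [η, dif_pos hv] using hcW v hv
    · simpa only [η, dif_neg hv] using hcO v hv
  by_cases hu : u ∈ W
  · by_cases hv : v ∈ W
    · obtain ⟨c, hc, c', hc', hC, hτc, hτc'⟩ := hinside u hu v hv huv
      simp only [η, dif_pos hu, dif_pos hv]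
      rwa [hunique u hu c hc _ (hcW u hu) hτc (hτW u hu),
        hunique v hv c' hc' _ (hcW v hv) hτc' (hτW v hv)] at hC
    · exact (hsym _ _ _ _).2 (hout v u huv.symm hv)
  · exact hout u v huv hu

end

theorem stmt6_general {V A : Type} (G : SimpleGraph V)
    (D : V → Finset A) (C : V → V → Set (A × A))
    (hsym : ∀ u v : V, ∀ a b : A, (a, b) ∈ C u v ↔ (b, a) ∈ C v u)
    (W : Finset V) (k : ℕ) (hWk : W.card = k)
    (hvc : ∀ u v : V, G.Adj u v → u ∈ W ∨ v ∈ W) :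
    (∃ τ : V → A → Prop,
        -- weight exactly `k` over the variable set `X = {x_{w,c} : w ∈ W, c ∈ D w}`
        Nat.card {p : V × A // p.1 ∈ W ∧ p.2 ∈ D p.1 ∧ τ p.1 p.2} = k ∧
        -- F¹ : every vertex of `W` gets at least one value
        (∀ w ∈ W, ∃ c ∈ D w, τ w c) ∧
        -- F² : no conflict between vertices of `W`
        (∀ w₁ ∈ W, ∀ w₂ ∈ W, G.Adj w₁ w₂ →
          ∃ c ∈ D w₁, ∃ c' ∈ D w₂, (c, c') ∈ C w₁ w₂ ∧ τ w₁ c ∧ τ w₂ c') ∧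
        -- F⁴ (using F³) : every vertex outside `W` can choose a conflict-free value
        (∀ v : V, v ∉ W → ∃ c ∈ D v,
          ∀ w ∈ W, G.Adj v w → ∀ c' ∈ D w, (c, c') ∉ C v w → ¬ τ w c')) ↔
    (∃ η : V → A, (∀ v, η v ∈ D v) ∧ ∀ u v, G.Adj u v → (η u, η v) ∈ C u v) := by
  constructor
  · rintro ⟨τ, hcard, hcover, hinside, houtside⟩
    exact exists_solution_of_weight_eq_card G D C hsym W hvc τ (hcard.trans hWk.symm)
      hcover hinside houtside
  · rintro ⟨η, hηD, hηC⟩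
    refine ⟨fun w c => c = η w, hWk ▸ natCard_graph_eq_card W D η fun w _ => hηD w,
      fun w _ => ⟨η w, hηD w, rfl⟩,
      fun w₁ _ w₂ _ hadj => ⟨η w₁, hηD w₁, η w₂, hηD w₂, hηC w₁ w₂ hadj, rfl, rfl⟩,
      fun v _ => ⟨η v, hηD v, fun w _ hadj c' _ hC hc' => hC (hc' ▸ hηC v w hadj)⟩⟩

/-- correctness of the W[3]-membership formula for BinCSP parameterized by
vertex cover. Given a BinCSP instance with Gaifman graph `G`, domains `D`, constraints `C`
(with the symmetry convention and `C u v ⊆ D u × D v`), and a vertex cover `W` of size `k`,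
the formula `F = F¹ ∧ F² ∧ F⁴` over the variables `x_{w,c}` (`w ∈ W`, `c ∈ D w`),
modelled by a predicate `τ`, has a satisfying assignment of weight exactly `k` if and only
if the instance is satisfiable. -/
theorem stmt6 {V A : Type} [Fintype V] (G : SimpleGraph V)
    (D : V → Finset A) (C : V → V → Set (A × A))
    (hsym : ∀ u v : V, ∀ a b : A, (a, b) ∈ C u v ↔ (b, a) ∈ C v u)
    (hdom : ∀ u v : V, ∀ a b : A, (a, b) ∈ C u v → a ∈ D u ∧ b ∈ D v)
    (W : Finset V) (k : ℕ) (hWk : W.card = k)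
    (hvc : ∀ u v : V, G.Adj u v → u ∈ W ∨ v ∈ W) :
    (∃ τ : V → A → Prop,
        -- weight exactly `k` over the variable set `X = {x_{w,c} : w ∈ W, c ∈ D w}`
        Nat.card {p : V × A // p.1 ∈ W ∧ p.2 ∈ D p.1 ∧ τ p.1 p.2} = k ∧
        -- F¹ : every vertex of `W` gets at least one value
        (∀ w ∈ W, ∃ c ∈ D w, τ w c) ∧
        -- F² : no conflict between vertices of `W`
        (∀ w₁ ∈ W, ∀ w₂ ∈ W, G.Adj w₁ w₂ →
          ∃ c ∈ D w₁, ∃ c' ∈ D w₂, (c, c') ∈ C w₁ w₂ ∧ τ w₁ c ∧ τ w₂ c') ∧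
        -- F⁴ (using F³) : every vertex outside `W` can choose a conflict-free value
        (∀ v : V, v ∉ W → ∃ c ∈ D v,
          ∀ w ∈ W, G.Adj v w → ∀ c' ∈ D w, (c, c') ∉ C v w → ¬ τ w c')) ↔
    (∃ η : V → A, (∀ v, η v ∈ D v) ∧ ∀ u v, G.Adj u v → (η u, η v) ∈ C u v) :=
  stmt6_general G D C hsym W k hWk hvc
end

section
/- Let I be a BinCSP instance with Gaifman graph G, let W ⊆ V(G), and let T be an elimination forest of G − W such that every edge of T is an edge of G. For v ∈ V(G)∖W, let A(v) be the set of ancestors of v in T including v, B(v) the set of children of v in T, and desc(v) the set of strict descendants of v in T. Call f : A(v) → ⋃_u D(u) conflict-free if f(x) ∈ D(x) for all x ∈ A(v) and (f(x), f(y)) ∈ C(x,y) for every edge xy of G with x, y ∈ A(v). Fix α with α(w) ∈ D(w) for every w ∈ W, and define, by recursion from the leaves of T upwards, for each v ∈ V(G)∖W and each conflict-free f : A(v) → ⋃_u D(u), the Boolean value F⁶(α, v, f) to be true iff (a) for every x ∈ A(v) and w ∈ W with xw ∈ E(G), (f(x), α(w)) ∈ C(x, w), and (b) for every y ∈ B(v)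 there exists c ∈ D(y) such that f extended by y ↦ c is conflict-free on A(y) = A(v) ∪ {y} and F⁶(α, y, f ⊕ (y ↦ c)) is true. Then F⁶(α, v, f) is true if and only if there exists η : A(v) ∪ desc(v) ∪ W → ⋃_u D(u) extending f with η(w) = α(w) for all w ∈ W, η(u) ∈ D(u) for all u, and (η(x), η(y)) ∈ C(x, y) for every edge xy of G whose endpoints both lie in A(v) ∪ desc(v) ∪ W and at least one of which lies in A(v) ∪ desc(v). -/
namespace RootedForest

/-- `F.anc u v` means that `u` is an ancestor of `v` in `F` (possibly `u = v`). -/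
def anc {V : Type} (F : RootedForest V) (u v : V) : Prop :=
  Relation.ReflTransGen (fun a b => F.parent a = some b) v u

end RootedForest

/-- `f` is conflict-free at `v`: on the set `A(v)` of ancestors of `v` (including `v`),
`f` respects the domains and all constraints of the instance. -/
def ConflictFree {V A : Type} {W : Set V} (G : SimpleGraph V) (D : V → Set A)
    (C : V → V → Set (A × A)) (T : RootedForest {v : V // v ∉ W})
    (v : {v : V // v ∉ W}) (f : {v : V // v ∉ W} → A) : Prop :=
  (∀ x : {v : V // v ∉ W}, T.anc x v → f x ∈ D ↑x) ∧
  (∀ x y : {v : V // v ∉ W}, T.anc x v → T.anc y v → G.Adj ↑x ↑y → (f x, f y) ∈ C ↑x ↑y)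

namespace RootedForest

variable {V : Type} {T : RootedForest V} {v x y y' z : V}

def Comparable (T : RootedForest V) (u v : V) : Prop :=
  T.anc u v ∨ T.anc v u

theorem anc_rfl : T.anc v v := .refl

theorem anc_trans (hxy : T.anc x y) (hyz : T.anc y z) : T.anc x z := hyz.trans hxy

theorem anc_of_parent_eq (hy : T.parent y = some v) : T.anc v y := .single hy

theorem not_transGen_parent_self (x : V) :
    ¬ Relation.TransGen (fun a b => T.parent a = some b) x x := fun h =>
  T.wf.transGen.irrefl.irrefl x (Relation.transGen_swap.mpr h)

theorem not_anc_of_parent_eq (hy : T.parent y = some v) : ¬ T.anc y v := fun h =>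
  not_transGen_parent_self v (.tail' h hy)

theorem ne_of_anc_of_parent_eq (hy : T.parent y = some v) (hx : T.anc x v) : x ≠ y := by
  rintro rfl
  exact not_anc_of_parent_eq hy hx

theorem eq_or_anc_of_anc_of_parent_eq (hy : T.parent y = some v) (hx : T.anc x y) :
    x = y ∨ T.anc x v := by
  rcases hx.cases_head with rfl | ⟨d, hd, hdx⟩
  · exact Or.inl rfl
  · obtain rfl := Option.some.inj (hd.symm.trans hy)
    exact Or.inr hdx

theorem exists_parent_eq_anc (hvx : T.anc v x) (hne : x ≠ v) :
    ∃ y, T.parent y = some v ∧ T.anc y x := by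
  rcases hvx.cases_tail with rfl | ⟨y, hxy, hy⟩
  · exact absurd rfl hne
  · exact ⟨y, hy, hxy⟩

theorem comparable_of_anc (hxz : T.anc x z) (hyz : T.anc y z) : T.Comparable x y :=
  (Relation.ReflTransGen.total_of_right_unique
    (fun _ _ _ hb hc => Option.some.inj (hb.symm.trans hc)) hxz hyz).symm

theorem eq_of_parent_eq_of_anc (hy : T.parent y = some v) (hy' : T.parent y' = some v)
    (hyx : T.anc y x) (hy'x : T.anc y' x) : y = y' := by
  rcases comparable_of_anc hyx hy'x with h | h
  · exact (eq_or_anc_of_anc_of_parent_eq hy' h).resolve_right (not_anc_of_parent_eq hy)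
  · exact ((eq_or_anc_of_anc_of_parent_eq hy h).resolve_right (not_anc_of_parent_eq hy')).symm

theorem Comparable.anc_or_exists_parent_eq (h : T.Comparable x v) :
    T.anc x v ∨ ∃ y, T.parent y = some v ∧ T.anc y x := by
  by_cases hxv : x = v
  · exact Or.inl (hxv ▸ anc_rfl)
  · exact h.imp_right fun hvx => exists_parent_eq_anc hvx hxv

theorem Comparable.of_parent_eq (hy : T.parent y = some v) (h : T.Comparable x y) :
    T.Comparable x v := by
  rcases h with hxy | hyx
  · exact (eq_or_anc_of_anc_of_parent_eq hy hxy).elim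
      (fun hxy => Or.inr (hxy ▸ anc_of_parent_eq hy)) Or.inl
  · exact Or.inr (anc_trans (anc_of_parent_eq hy) hyx)

theorem wellFounded_child [Finite V] (T : RootedForest V) :
    WellFounded (fun y x => T.parent y = some x) := by
  have : IsTrans V (Relation.TransGen fun y x => T.parent y = some x) :=
    ⟨fun _ _ _ => Relation.TransGen.trans⟩
  have : Std.Irrefl (Relation.TransGen fun y x => T.parent y = some x) :=
    ⟨not_transGen_parent_self⟩
  exact (Finite.wellFounded_of_trans_of_irrefl
    (Relation.TransGen fun y x : V => T.parent y = some x)).mono fun _ _ h => .single h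

end RootedForest

section Extension

open RootedForest Function

variable {V A : Type} {W : Set V} {G : SimpleGraph V} {D : V → Set A}
  {C : V → V → Set (A × A)} {T : RootedForest {v : V // v ∉ W}} {α : V → A}
  {v x y z : {v : V // v ∉ W}} {f : {v : V // v ∉ W} → A} {η : V → A}

structure ExtendsBelow (G : SimpleGraph V) (D : V → Set A) (C : V → V → Set (A × A))
    (T : RootedForest {v : V // v ∉ W}) (α : V → A) (v : {v : V // v ∉ W})
    (f : {v : V // v ∉ W} → A) (η : V → A) : Prop where
  eq_of_anc : ∀ x, T.anc x v → η x = f x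
  eq_of_mem : ∀ w ∈ W, η w = α w
  mem_dom : ∀ x, T.Comparable x v → η x ∈ D x
  mem_dom_of_mem : ∀ w ∈ W, η w ∈ D w
  mem_constraint : ∀ x y, T.Comparable x v → T.Comparable y v → G.Adj x y → (η x, η y) ∈ C x y
  mem_constraint_of_mem :
    ∀ x, T.Comparable x v → ∀ w ∈ W, G.Adj x w → (η x, η w) ∈ C x w

def SatisfiesF6Recurrence (G : SimpleGraph V) (D : V → Set A) (C : V → V → Set (A × A))
    (T : RootedForest {v : V // v ∉ W}) (α : V → A) [DecidableEq V]
    (Φ : {v : V // v ∉ W} → ({v : V // v ∉ W} → A) → Prop) : Prop :=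
  ∀ v f, ConflictFree G D C T v f →
    (Φ v f ↔
      (∀ x, T.anc x v → ∀ w ∈ W, G.Adj ↑x w → (f x, α w) ∈ C ↑x w) ∧
      ∀ y, T.parent y = some v →
        ∃ c ∈ D y, ConflictFree G D C T y (update f y c) ∧ Φ y (update f y c))

theorem ExtendsBelow.mem_constraint_of_anc (hη : ExtendsBelow G D C T α v f η)
    (hx : T.anc x v) {w : V} (hw : w ∈ W) (hadj : G.Adj x w) : (f x, α w) ∈ C x w := by
  rw [← hη.eq_of_anc x hx, ← hη.eq_of_mem w hw]
  exact hη.mem_constraint_of_mem x (Or.inl hx) w hw hadj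

section Restrict

variable [DecidableEq V]

theorem update_apply_of_anc_of_parent_eq (hy : T.parent y = some v) (hx : T.anc x v) (c : A) :
    update f y c x = f x :=
  update_of_ne (ne_of_anc_of_parent_eq hy hx) c f

theorem ExtendsBelow.update_apply_of_anc (hη : ExtendsBelow G D C T α v f η)
    (hy : T.parent y = some v) (hx : T.anc x y) : update f y (η y) x = η x := by
  rcases eq_or_anc_of_anc_of_parent_eq hy hx with rfl | hxv
  · exact update_self x (η x) f
  · rw [update_apply_of_anc_of_parent_eq hy hxv, hη.eq_of_anc x hxv]

theorem ExtendsBelow.conflictFree_update (hη : ExtendsBelow G D C T α v f η)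
    (hy : T.parent y = some v) : ConflictFree G D C T y (update f y (η y)) := by
  constructor
  · intro x hx
    rw [hη.update_apply_of_anc hy hx]
    exact hη.mem_dom x (Comparable.of_parent_eq hy (.inl hx))
  · intro x z hx hz hadj
    rw [hη.update_apply_of_anc hy hx, hη.update_apply_of_anc hy hz]
    exact hη.mem_constraint x z (Comparable.of_parent_eq hy (.inl hx))
      (Comparable.of_parent_eq hy (.inl hz)) hadj

theorem ExtendsBelow.of_parent_eq (hη : ExtendsBelow G D C T α v f η)
    (hy : T.parent y = some v) : ExtendsBelow G D C T α y (update f y (η y)) η where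
  eq_of_anc _ hx := (hη.update_apply_of_anc hy hx).symm
  eq_of_mem := hη.eq_of_mem
  mem_dom x hx := hη.mem_dom x (hx.of_parent_eq hy)
  mem_dom_of_mem := hη.mem_dom_of_mem
  mem_constraint x z hx hz := hη.mem_constraint x z (hx.of_parent_eq hy) (hz.of_parent_eq hy)
  mem_constraint_of_mem x hx := hη.mem_constraint_of_mem x (hx.of_parent_eq hy)

end Restrict

open Classical in
noncomputable def glueChildren (T : RootedForest {v : V // v ∉ W}) (α : V → A)
    (v : {v : V // v ∉ W}) (f : {v : V // v ∉ W} → A) (g : {v : V // v ∉ W} → V → A) :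
    V → A := fun u =>
  if hu : u ∈ W then α u
  else if h : ∃ y, T.parent y = some v ∧ T.anc y ⟨u, hu⟩ then g h.choose u
  else f ⟨u, hu⟩

variable {g : {v : V // v ∉ W} → V → A}

theorem glueChildren_of_mem {w : V} (hw : w ∈ W) : glueChildren T α v f g w = α w :=
  dif_pos hw

theorem glueChildren_of_anc (hx : T.anc x v) : glueChildren T α v f g x = f x := by
  have hnot : ¬ ∃ y, T.parent y = some v ∧ T.anc y x := fun ⟨y, hy, hyx⟩ =>
    not_anc_of_parent_eq hy (anc_trans hyx hx)
  simp only [glueChildren, dif_neg x.2, Subtype.coe_eta, dif_neg hnot]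

theorem glueChildren_of_parent_eq (hy : T.parent y = some v) (hyx : T.anc y x) :
    glueChildren T α v f g x = g y x := by
  have hex : ∃ y, T.parent y = some v ∧ T.anc y x := ⟨y, hy, hyx⟩
  simp only [glueChildren, dif_neg x.2, Subtype.coe_eta, dif_pos hex]
  rw [eq_of_parent_eq_of_anc hex.choose_spec.1 hy hex.choose_spec.2 hyx]

variable [DecidableEq V]
  (hg : ∀ y, T.parent y = some v → ∃ c, ExtendsBelow G D C T α y (update f y c) (g y))
include hg

theorem glueChildren_of_comparable (hy : T.parent y = some v) (hx : T.Comparable x y) :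
    glueChildren T α v f g x = g y x := by
  rcases hx with hxy | hyx
  · rcases eq_or_anc_of_anc_of_parent_eq hy hxy with rfl | hxv
    · exact glueChildren_of_parent_eq hy anc_rfl
    · obtain ⟨c, hc⟩ := hg y hy
      rw [glueChildren_of_anc hxv, hc.eq_of_anc x hxy, update_apply_of_anc_of_parent_eq hy hxv]
  · exact glueChildren_of_parent_eq hy hyx

theorem glueChildren_mem_constraint_of_anc (hf : ConflictFree G D C T v f)
    (hxz : T.anc x z) (hz : T.Comparable z v) (hadj : G.Adj x z) :
    (glueChildren T α v f g x, glueChildren T α v f g z) ∈ C x z := by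
  rcases hz.anc_or_exists_parent_eq with hzv | ⟨y, hy, hyz⟩
  · have hxv := anc_trans hxz hzv
    rw [glueChildren_of_anc hxv, glueChildren_of_anc hzv]
    exact hf.2 x z hxv hzv hadj
  · obtain ⟨c, hc⟩ := hg y hy
    have hxy := comparable_of_anc hxz hyz
    rw [glueChildren_of_comparable hg hy hxy, glueChildren_of_parent_eq hy hyz]
    exact hc.mem_constraint x z hxy (Or.inr hyz) hadj

theorem extendsBelow_glueChildren (hsym : ∀ u v : V, ∀ a b : A, (a, b) ∈ C u v ↔ (b, a) ∈ C v u)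
    (hElim : ∀ u v : {v : V // v ∉ W}, G.Adj ↑u ↑v → T.anc u v ∨ T.anc v u)
    (hα : ∀ w ∈ W, α w ∈ D w) (hf : ConflictFree G D C T v f)
    (hfW : ∀ x, T.anc x v → ∀ w ∈ W, G.Adj ↑x w → (f x, α w) ∈ C ↑x w) :
    ExtendsBelow G D C T α v f (glueChildren T α v f g) where
  eq_of_anc _ := glueChildren_of_anc
  eq_of_mem _ := glueChildren_of_mem
  mem_dom x hx := by
    rcases hx.anc_or_exists_parent_eq with hxv | ⟨y, hy, hyx⟩
    · rw [glueChildren_of_anc hxv]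
      exact hf.1 x hxv
    · obtain ⟨c, hc⟩ := hg y hy
      rw [glueChildren_of_parent_eq hy hyx]
      exact hc.mem_dom x (Or.inr hyx)
  mem_dom_of_mem w hw := by
    rw [glueChildren_of_mem hw]
    exact hα w hw
  mem_constraint x z hx hz hadj := by
    rcases hElim x z hadj with hxz | hzx
    · exact glueChildren_mem_constraint_of_anc hg hf hxz hz hadj
    · exact (hsym _ _ _ _).mpr (glueChildren_mem_constraint_of_anc hg hf hzx hx hadj.symm)
  mem_constraint_of_mem x hx w hw hadj := by
    rw [glueChildren_of_mem hw]
    rcases hx.anc_or_exists_parent_eq with hxv | ⟨y, hy, hyx⟩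
    · rw [glueChildren_of_anc hxv]
      exact hfW x hxv w hw hadj
    · obtain ⟨c, hc⟩ := hg y hy
      rw [glueChildren_of_parent_eq hy hyx, ← hc.eq_of_mem w hw]
      exact hc.mem_constraint_of_mem x (Or.inr hyx) w hw hadj

omit hg in
theorem SatisfiesF6Recurrence.iff_exists_extendsBelow [Finite V]
    (hsym : ∀ u v : V, ∀ a b : A, (a, b) ∈ C u v ↔ (b, a) ∈ C v u)
    (hElim : ∀ u v : {v : V // v ∉ W}, G.Adj ↑u ↑v → T.anc u v ∨ T.anc v u)
    (hα : ∀ w ∈ W, α w ∈ D w) {Φ : {v : V // v ∉ W} → ({v : V // v ∉ W} → A) → Prop}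
    (hΦ : SatisfiesF6Recurrence G D C T α Φ) (v : {v : V // v ∉ W}) :
    ∀ f, ConflictFree G D C T v f → (Φ v f ↔ ∃ η, ExtendsBelow G D C T α v f η) := by
  induction v using T.wellFounded_child.induction with
  | _ v IH =>
  intro f hf
  rw [hΦ v f hf]
  constructor
  · rintro ⟨hfW, hchildren⟩
    have hext : ∀ y, ∃ η, T.parent y = some v →
        ∃ c, ExtendsBelow G D C T α y (update f y c) η := by
      intro y
      by_cases hy : T.parent y = some v
      · obtain ⟨c, -, hcf, hΦy⟩ := hchildren y hy
        obtain ⟨η, hη⟩ := (IH y hy _ hcf).mp hΦy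
        exact ⟨η, fun _ => ⟨c, hη⟩⟩
      · exact ⟨α, fun h => absurd h hy⟩
    choose g hg using hext
    exact ⟨_, extendsBelow_glueChildren hg hsym hElim hα hf hfW⟩
  · rintro ⟨η, hη⟩
    refine ⟨fun x hx w hw hadj => hη.mem_constraint_of_anc hx hw hadj, fun y hy => ?_⟩
    have hcf := hη.conflictFree_update hy
    exact ⟨η y, hη.mem_dom y (.inr (anc_of_parent_eq hy)), hcf,
      (IH y hy _ hcf).mpr ⟨η, hη.of_parent_eq hy⟩⟩

end Extension

theorem stmt9_general {V A : Type} [Fintype V] [DecidableEq V] (G : SimpleGraph V)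
    (D : V → Set A) (C : V → V → Set (A × A))
    (hsym : ∀ u v : V, ∀ a b : A, (a, b) ∈ C u v ↔ (b, a) ∈ C v u)
    (W : Set V) (T : RootedForest {v : V // v ∉ W})
    -- `T` is an elimination forest of `G − W` all of whose edges are edges of `G`
    (hElim : ∀ u v : {v : V // v ∉ W}, G.Adj ↑u ↑v → T.anc u v ∨ T.anc v u)
    -- a fixed assignment of the modulator
    (α : V → A) (hα : ∀ w ∈ W, α w ∈ D w)
    -- `Φ` satisfies the defining recurrence of `F⁶`
    (Φ : {v : V // v ∉ W} → ({v : V // v ∉ W} → A) → Prop)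
    (hΦ : ∀ (v : {v : V // v ∉ W}) (f : {v : V // v ∉ W} → A),
      ConflictFree G D C T v f →
      (Φ v f ↔
        ((∀ x : {v : V // v ∉ W}, T.anc x v →
            ∀ w ∈ W, G.Adj ↑x w → (f x, α w) ∈ C ↑x w) ∧
         (∀ y : {v : V // v ∉ W}, T.parent y = some v →
            ∃ c ∈ D ↑y, ConflictFree G D C T y (Function.update f y c) ∧
              Φ y (Function.update f y c)))))
    (v : {v : V // v ∉ W}) (f : {v : V // v ∉ W} → A)
    (hf : ConflictFree G D C T v f) :
    Φ v f ↔
      ∃ η : V → A,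
        -- `η` extends `f` on `A(v)` and agrees with `α` on `W`
        (∀ x : {v : V // v ∉ W}, T.anc x v → η ↑x = f x) ∧
        (∀ w ∈ W, η w = α w) ∧
        -- `η` respects the domains on `A(v) ∪ desc(v) ∪ W`
        (∀ x : {v : V // v ∉ W}, (T.anc x v ∨ T.anc v x) → η ↑x ∈ D ↑x) ∧
        (∀ w ∈ W, η w ∈ D w) ∧
        -- `η` respects the constraints on edges inside `A(v) ∪ desc(v)`
        (∀ x y : {v : V // v ∉ W}, (T.anc x v ∨ T.anc v x) → (T.anc y v ∨ T.anc v y) →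
          G.Adj ↑x ↑y → (η ↑x, η ↑y) ∈ C ↑x ↑y) ∧
        -- `η` respects the constraints on edges between `A(v) ∪ desc(v)` and `W`
        (∀ x : {v : V // v ∉ W}, (T.anc x v ∨ T.anc v x) →
          ∀ w ∈ W, G.Adj ↑x w → (η ↑x, η w) ∈ C ↑x w) := by
  rw [SatisfiesF6Recurrence.iff_exists_extendsBelow hsym hElim hα hΦ v f hf]
  exact exists_congr fun η =>
    ⟨fun ⟨h₁, h₂, h₃, h₄, h₅, h₆⟩ => ⟨h₁, h₂, h₃, h₄, h₅, h₆⟩,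
      fun ⟨h₁, h₂, h₃, h₄, h₅, h₆⟩ => ⟨h₁, h₂, h₃, h₄, h₅, h₆⟩⟩

/-- correctness of the recursively defined values `F⁶(α, v, f)`.
`Φ : (v, f) ↦ Prop` is any predicate satisfying the defining recurrence of `F⁶` (clause
(a): no conflict of the ancestors with the assignment `α` of the modulator `W`; clause
(b): every child subtree admits a conflict-free extension with `Φ` true). Then for every
conflict-free `f`, `Φ v f` holds iff the assignment given by `f` on `A(v)` and `α` on `W`
extends to `v`, its ancestors, its descendants and `W`, respecting domains and all
constraints with at least one endpoint in `A(v) ∪ desc(v)`. -/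
theorem stmt9 {V A : Type} [Fintype V] [DecidableEq V] (G : SimpleGraph V)
    (D : V → Set A) (C : V → V → Set (A × A))
    (hsym : ∀ u v : V, ∀ a b : A, (a, b) ∈ C u v ↔ (b, a) ∈ C v u)
    (hdom : ∀ u v : V, ∀ a b : A, (a, b) ∈ C u v → a ∈ D u ∧ b ∈ D v)
    (W : Set V) (T : RootedForest {v : V // v ∉ W})
    -- `T` is an elimination forest of `G − W` all of whose edges are edges of `G`
    (hElim : ∀ u v : {v : V // v ∉ W}, G.Adj ↑u ↑v → T.anc u v ∨ T.anc v u)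
    (hTE : ∀ u v : {v : V // v ∉ W}, T.parent u = some v → G.Adj ↑u ↑v)
    -- a fixed assignment of the modulator
    (α : V → A) (hα : ∀ w ∈ W, α w ∈ D w)
    -- `Φ` satisfies the defining recurrence of `F⁶`
    (Φ : {v : V // v ∉ W} → ({v : V // v ∉ W} → A) → Prop)
    (hΦ : ∀ (v : {v : V // v ∉ W}) (f : {v : V // v ∉ W} → A),
      ConflictFree G D C T v f →
      (Φ v f ↔
        ((∀ x : {v : V // v ∉ W}, T.anc x v →
            ∀ w ∈ W, G.Adj ↑x w → (f x, α w) ∈ C ↑x w) ∧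
         (∀ y : {v : V // v ∉ W}, T.parent y = some v →
            ∃ c ∈ D ↑y, ConflictFree G D C T y (Function.update f y c) ∧
              Φ y (Function.update f y c)))))
    (v : {v : V // v ∉ W}) (f : {v : V // v ∉ W} → A)
    (hf : ConflictFree G D C T v f) :
    Φ v f ↔
      ∃ η : V → A,
        -- `η` extends `f` on `A(v)` and agrees with `α` on `W`
        (∀ x : {v : V // v ∉ W}, T.anc x v → η ↑x = f x) ∧
        (∀ w ∈ W, η w = α w) ∧
        -- `η` respects the domains on `A(v) ∪ desc(v) ∪ W`
        (∀ x : {v : V // v ∉ W}, (T.anc x v ∨ T.anc v x) → η ↑x ∈ D ↑x) ∧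
        (∀ w ∈ W, η w ∈ D w) ∧
        -- `η` respects the constraints on edges inside `A(v) ∪ desc(v)`
        (∀ x y : {v : V // v ∉ W}, (T.anc x v ∨ T.anc v x) → (T.anc y v ∨ T.anc v y) →
          G.Adj ↑x ↑y → (η ↑x, η ↑y) ∈ C ↑x ↑y) ∧
        -- `η` respects the constraints on edges between `A(v) ∪ desc(v)` and `W`
        (∀ x : {v : V // v ∉ W}, (T.anc x v ∨ T.anc v x) →
          ∀ w ∈ W, G.Adj ↑x w → (η ↑x, η w) ∈ C ↑x w) :=
  stmt9_general G D C hsym W T hElim α hα Φ hΦ v f hf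
end

section
/- Let G be a finite graph with a vertex cover S of size k, let 𝒞 be a finite set of colors with |𝒞| ≥ k + 1, let W ⊆ V(G), and let f : W → 𝒞 be a precoloring. Then f extends to a proper coloring of G with colors from 𝒞 if and only if both of the following hold: (i) f is a proper coloring of the induced subgraph G[W] (no edge of G with both endpoints in W has its endpoints assigned the same color by f); and (ii) the List Coloring instance on the induced subgraph G[S ∖ W] with lists L(v) = 𝒞 ∖ {f(w) : w ∈ W, vw ∈ E(G)} is a yes-instance. -/
/-!
A proper extension restricts to a solution of the list-coloring instance, so the conditions are
necessary. Conversely, (i) and (ii) together color `W ∪ S` properly. The vertices outside the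
vertex cover `S` are pairwise non-adjacent and all their neighbours lie in `S`, whose colors use
at most `k` of the at least `k + 1` available ones; so a single color unused on `S`, given to
every vertex outside `W ∪ S`, completes the coloring.
-/

namespace SimpleGraph

variable {V Col : Type*} {G : SimpleGraph V}

theorem exists_proper_extension_of_vertexCover_subset {S : Finset V}
    (hS : ∀ u v, G.Adj u v → u ∈ S ∨ v ∈ S) {𝒞 : Finset Col} (hcard : S.card < 𝒞.card)
    {U : Set V} (hSU : ↑S ⊆ U) {c : V → Col} (hc𝒞 : ∀ v ∈ U, c v ∈ 𝒞)
    (hc : ∀ u ∈ U, ∀ v ∈ U, G.Adj u v → c u ≠ c v) :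
    ∃ f' : V → Col, (∀ v, f' v ∈ 𝒞) ∧ Set.EqOn f' c U ∧ ∀ u v, G.Adj u v → f' u ≠ f' v := by
  classical
  obtain ⟨c₀, hc₀, hc₀S⟩ :=
    Finset.exists_mem_notMem_of_card_lt_card (Finset.card_image_le.trans_lt hcard)
  set f' := U.piecewise c fun _ => c₀
  have hf'U : Set.EqOn f' c U := Set.piecewise_eqOn _ _ _
  have hf'out : ∀ v ∉ U, f' v = c₀ := fun _ hv => Set.piecewise_eq_of_notMem _ _ _ hv
  have hproper_of_mem_S : ∀ u v, G.Adj u v → u ∈ S → f' u ≠ f' v := by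
    intro u v huv hu
    have hu' : u ∈ U := hSU hu
    by_cases hv : v ∈ U
    · rw [hf'U hu', hf'U hv]
      exact hc u hu' v hv huv
    · rw [hf'U hu', hf'out v hv]
      exact fun h => hc₀S (Finset.mem_image.2 ⟨u, hu, h⟩)
  refine ⟨f', fun v => ?_, hf'U, fun u v huv => ?_⟩
  · by_cases hv : v ∈ U
    · exact hf'U hv ▸ hc𝒞 v hv
    · exact hf'out v hv ▸ hc₀
  · rcases hS u v huv with hu | hv
    · exact hproper_of_mem_S u v huv hu
    · exact (hproper_of_mem_S v u huv.symm hv).symm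

section ListColoring

variable {S : Finset V} {W : Set V} {𝒞 : Finset Col} {f c : V → Col}
  {g : {v : V // v ∈ S ∧ v ∉ W} → Col}

theorem mem_or_exists_val_eq_of_mem_union {v : V} (hv : v ∈ W ∪ ↑S) :
    v ∈ W ∨ ∃ x : {v : V // v ∈ S ∧ v ∉ W}, ↑x = v := by
  by_cases hvW : v ∈ W
  · exact .inl hvW
  · exact .inr ⟨⟨v, hv.resolve_left hvW, hvW⟩, rfl⟩

theorem mem_of_mem_union_of_listColoring (hcW : Set.EqOn c f W)
    (hcg : ∀ x : {v : V // v ∈ S ∧ v ∉ W}, c x = g x) (hg : ∀ x, g x ∈ (↑𝒞 : Set Col))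
    (hf𝒞 : ∀ w ∈ W, f w ∈ 𝒞) :
    ∀ v ∈ W ∪ ↑S, c v ∈ 𝒞 := by
  intro v hv
  rcases mem_or_exists_val_eq_of_mem_union hv with hv | ⟨x, rfl⟩
  · exact hcW hv ▸ hf𝒞 v hv
  · exact hcg x ▸ hg x

theorem adj_ne_of_mem_union_of_listColoring (hcW : Set.EqOn c f W)
    (hcg : ∀ x : {v : V // v ∈ S ∧ v ∉ W}, c x = g x)
    (hg : ∀ x : {v : V // v ∈ S ∧ v ∉ W}, g x ∉ {a | ∃ w ∈ W, G.Adj ↑x w ∧ f w = a})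
    (hW : ∀ u ∈ W, ∀ v ∈ W, G.Adj u v → f u ≠ f v)
    (hgadj : ∀ x y : {v : V // v ∈ S ∧ v ∉ W}, G.Adj ↑x ↑y → g x ≠ g y) :
    ∀ u ∈ W ∪ ↑S, ∀ v ∈ W ∪ ↑S, G.Adj u v → c u ≠ c v := by
  intro u hu v hv huv
  rcases mem_or_exists_val_eq_of_mem_union hu with hu | ⟨x, rfl⟩ <;>
    rcases mem_or_exists_val_eq_of_mem_union hv with hv | ⟨y, rfl⟩
  · rw [hcW hu, hcW hv]; exact hW u hu v hv huv
  · rw [hcW hu, hcg]; exact fun h => hg y ⟨u, hu, huv.symm, h⟩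
  · rw [hcg, hcW hv]; exact fun h => hg x ⟨v, hv, huv, h.symm⟩
  · rw [hcg, hcg]; exact hgadj x y huv

end ListColoring

end SimpleGraph

open SimpleGraph

theorem stmt14_general {V Col : Type} (G : SimpleGraph V)
    (S : Finset V) (k : ℕ) (hSk : S.card = k)
    (hvc : ∀ u v : V, G.Adj u v → u ∈ S ∨ v ∈ S)
    (𝒞 : Finset Col) (h𝒞 : k + 1 ≤ 𝒞.card)
    (W : Set V) (f : V → Col) (hf𝒞 : ∀ w ∈ W, f w ∈ 𝒞) :
    (∃ f' : V → Col, (∀ v, f' v ∈ 𝒞) ∧ (∀ w ∈ W, f' w = f w) ∧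
        ∀ u v : V, G.Adj u v → f' u ≠ f' v) ↔
      ((∀ u ∈ W, ∀ v ∈ W, G.Adj u v → f u ≠ f v) ∧
       (∃ g : {v : V // v ∈ S ∧ v ∉ W} → Col,
          (∀ x : {v : V // v ∈ S ∧ v ∉ W},
            g x ∈ (↑𝒞 : Set Col) \ {c : Col | ∃ w ∈ W, G.Adj ↑x w ∧ f w = c}) ∧
          ∀ x y : {v : V // v ∈ S ∧ v ∉ W}, G.Adj ↑x ↑y → g x ≠ g y)) := by
  constructor
  · rintro ⟨f', hf'𝒞, hf'W, hf'adj⟩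
    refine ⟨fun u hu v hv huv => ?_,
      fun x => f' x, fun x => ⟨hf'𝒞 x, ?_⟩, fun x y hxy => hf'adj _ _ hxy⟩
    · rw [← hf'W u hu, ← hf'W v hv]; exact hf'adj u v huv
    · rintro ⟨w, hw, hxw, hfw⟩
      exact hf'adj _ _ hxw ((hf'W w hw).trans hfw).symm
  · rintro ⟨hW, g, hg, hgadj⟩
    set c := Function.extend Subtype.val g f
    have hcW : Set.EqOn c f W := fun w hw =>
      Function.extend_apply' _ _ _ fun ⟨x, hx⟩ => x.2.2 (hx ▸ hw)
    have hcg : ∀ x : {v : V // v ∈ S ∧ v ∉ W}, c x = g x :=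
      Subtype.val_injective.extend_apply g f
    obtain ⟨f', hf'𝒞, hf'c, hf'adj⟩ := exists_proper_extension_of_vertexCover_subset hvc
      (by omega) Set.subset_union_right
      (mem_of_mem_union_of_listColoring hcW hcg (fun x => (hg x).1) hf𝒞)
      (adj_ne_of_mem_union_of_listColoring hcW hcg (fun x => (hg x).2) hW hgadj)
    exact ⟨f', hf'𝒞, fun w hw => (hf'c (.inl hw)).trans (hcW hw), hf'adj⟩

/-- Precoloring Extension with a vertex cover `S` of size `k` and at least
`k + 1` colors. A precoloring `f` of `W ⊆ V(G)` with colors from `𝒞` extends to a proper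
coloring of `G` with colors from `𝒞` iff (i) `f` is proper on `G[W]`, and (ii) the List
Coloring instance on `G[S ∖ W]` with lists `L(v) = 𝒞 ∖ {f w : w ∈ W, vw ∈ E(G)}` is a
yes-instance. -/
theorem stmt14 {V Col : Type} [Fintype V] (G : SimpleGraph V)
    (S : Finset V) (k : ℕ) (hSk : S.card = k)
    (hvc : ∀ u v : V, G.Adj u v → u ∈ S ∨ v ∈ S)
    (𝒞 : Finset Col) (h𝒞 : k + 1 ≤ 𝒞.card)
    (W : Set V) (f : V → Col) (hf𝒞 : ∀ w ∈ W, f w ∈ 𝒞) :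
    (∃ f' : V → Col, (∀ v, f' v ∈ 𝒞) ∧ (∀ w ∈ W, f' w = f w) ∧
        ∀ u v : V, G.Adj u v → f' u ≠ f' v) ↔
      ((∀ u ∈ W, ∀ v ∈ W, G.Adj u v → f u ≠ f v) ∧
       (∃ g : {v : V // v ∈ S ∧ v ∉ W} → Col,
          (∀ x : {v : V // v ∈ S ∧ v ∉ W},
            g x ∈ (↑𝒞 : Set Col) \ {c : Col | ∃ w ∈ W, G.Adj ↑x w ∧ f w = c}) ∧
          ∀ x y : {v : V // v ∈ S ∧ v ∉ W}, G.Adj ↑x ↑y → g x ≠ g y)) :=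
  stmt14_general G S k hSk hvc 𝒞 h𝒞 W f hf𝒞
end
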